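/- arXiv:2502.15420 — 6 statements merged into one kernel-verified Lean document; each statement's English description precedes it below -/
import Mathlib

section
/- Let N be a finite set of players and let S ⊆ N be nonempty. In the unanimity game ω_S, the Shapley value of a player j ∈ N is φ_j(ω_S) = 1/|S| if j ∈ S, and φ_j(ω_S) = 0 if j ∉ S. -/
open Finset

lemma key_nat (t : ℕ) (m : ℕ) :
    (t + 1) * ∑ k ∈ Finset.range (m + 1),
      m.choose k * ((t + k).factorial * (m - k).factorial) = (t + m + 1).factorial := by
  induction m with
  | zero =>
    simp [Nat.factorial_succ]
  | succ m ih =>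
    have step : ∑ k ∈ Finset.range (m + 2),
        (m + 1).choose k * ((t + k).factorial * (m + 1 - k).factorial)
        = (t + m + 2) * ∑ k ∈ Finset.range (m + 1),
            m.choose k * ((t + k).factorial * (m - k).factorial) := by
      have hsplit : ∑ k ∈ Finset.range (m + 2),
          (m + 1).choose k * ((t + k).factorial * (m + 1 - k).factorial)
          = (∑ k ∈ Finset.range (m + 1),
              m.choose k * ((t + k + 1) * ((t + k).factorial * (m - k).factorial)))
            + ((∑ k ∈ Finset.range (m + 1),
                m.choose (k + 1) * ((t + (k + 1)).factorial * (m - k).factorial))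
              + (m + 1).choose 0 * ((t + 0).factorial * (m + 1 - 0).factorial)) := by
        rw [Finset.sum_range_succ' _ (m + 1), ← add_assoc]
        congr 1
        rw [← Finset.sum_add_distrib]
        apply Finset.sum_congr rfl
        intro k hk
        rw [Finset.mem_range] at hk
        have h1 : m + 1 - (k + 1) = m - k := by omega
        rw [Nat.choose_succ_succ, h1, Nat.add_mul]
        congr 1
        have h2 : t + (k + 1) = (t + k) + 1 := by omega
        rw [h2, Nat.factorial_succ]
        ring
      have hsecond : (∑ k ∈ Finset.range (m + 1),
              m.choose (k + 1) * ((t + (k + 1)).factorial * (m - k).factorial))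
            + (m + 1).choose 0 * ((t + 0).factorial * (m + 1 - 0).factorial)
          = ∑ k ∈ Finset.range (m + 1),
              m.choose k * ((m + 1 - k) * ((t + k).factorial * (m - k).factorial)) := by
        have : ∑ k ∈ Finset.range (m + 2),
            m.choose k * ((t + k).factorial * (m + 1 - k).factorial)
            = (∑ k ∈ Finset.range (m + 1),
              m.choose (k + 1) * ((t + (k + 1)).factorial * (m - k).factorial))
            + (m + 1).choose 0 * ((t + 0).factorial * (m + 1 - 0).factorial) := by
          rw [Finset.sum_range_succ' _ (m + 1)]
          simp only [Nat.choose_zero_right, one_mul]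
          congr 1
          apply Finset.sum_congr rfl
          intro k hk
          rw [Finset.mem_range] at hk
          have h1 : m + 1 - (k + 1) = m - k := by omega
          rw [h1]
        rw [← this, Finset.sum_range_succ, Nat.choose_succ_self, zero_mul, add_zero]
        apply Finset.sum_congr rfl
        intro k hk
        rw [Finset.mem_range] at hk
        have h1 : m + 1 - k = (m - k) + 1 := by omega
        rw [h1, Nat.factorial_succ]
        ring
      rw [hsplit, hsecond, ← Finset.sum_add_distrib, Finset.mul_sum]
      apply Finset.sum_congr rfl
      intro k hk
      rw [Finset.mem_range] at hk
      have h1 : (t + k + 1) + (m + 1 - k) = t + m + 2 := by omega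
      rw [← Nat.mul_add, ← Nat.add_mul, h1]
      ring
    rw [step, ← Nat.mul_assoc, Nat.mul_comm (t+1) (t+m+2), Nat.mul_assoc, ih]
    have h2 : t + (m + 1) + 1 = (t + m + 1) + 1 := by omega
    rw [h2]
    conv_rhs => rw [Nat.factorial_succ]

/-- The Shapley value of player `j` in the cooperative game `ν`. -/
noncomputable def shapley {α : Type*} [Fintype α] [DecidableEq α]
    (ν : Finset α → ℝ) (j : α) : ℝ :=
  ∑ S ∈ (Finset.univ.erase j).powerset,
    ((S.card.factorial : ℝ) * ((Fintype.card α - S.card - 1).factorial : ℝ) /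
        ((Fintype.card α).factorial : ℝ)) * (ν (insert j S) - ν S)

/-- The unanimity game `ω_S`: worth `1` on coalitions containing `S`, else `0`. -/
def unanimity {α : Type*} [DecidableEq α] (S : Finset α) (T : Finset α) : ℝ :=
  if S ⊆ T then 1 else 0

/-- In the unanimity game `ω_S` (for nonempty `S`), the Shapley value of a
player `j` is `1/|S|` if `j ∈ S` and `0` otherwise. -/
theorem shapley_unanimity {α : Type*} [Fintype α] [DecidableEq α]
    (S : Finset α) (hS : S.Nonempty) (j : α) :
    shapley (unanimity S) j = if j ∈ S then 1 / (S.card : ℝ) else 0 := by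
  classical
  set n := Fintype.card α with hn
  by_cases hj : j ∈ S
  · rw [if_pos hj]
    have hs1 : 1 ≤ S.card := hS.card_pos
    have hsn : S.card ≤ n := S.card_le_univ
    set t := S.card - 1 with ht
    set m := n - S.card with hm
    have hnm : n = t + m + 1 := by omega
    have hst : S.card = t + 1 := by omega
    -- Step 1: rewrite each term as an if
    have h1 : shapley (unanimity S) j
        = ∑ T ∈ (Finset.univ.erase j).powerset,
            (if S.erase j ⊆ T then
              ((T.card.factorial : ℝ) * ((n - T.card - 1).factorial : ℝ) /
                (n.factorial : ℝ)) else 0) := by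
      rw [shapley]
      apply Finset.sum_congr rfl
      intro T hT
      rw [Finset.mem_powerset] at hT
      have hjT : j ∉ T := fun h => (Finset.mem_erase.mp (hT h)).1 rfl
      have h2 : ¬ S ⊆ T := fun h => hjT (h hj)
      rw [unanimity, unanimity, if_neg h2]
      by_cases hST : S.erase j ⊆ T
      · rw [if_pos (Finset.subset_insert_iff.mpr hST), if_pos hST]; ring
      · rw [if_neg (fun h => hST (Finset.subset_insert_iff.mp h)), if_neg hST]; ring
    rw [h1, ← Finset.sum_filter]
    -- Step 2: reindex by U := T \ (S.erase j)
    have h3 : ∑ T ∈ (Finset.univ.erase j).powerset.filter (fun T => S.erase j ⊆ T),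
          ((T.card.factorial : ℝ) * ((n - T.card - 1).factorial : ℝ) / (n.factorial : ℝ))
        = ∑ U ∈ (Finset.univ \ S).powerset,
          (((U.card + t).factorial : ℝ) * ((n - (U.card + t) - 1).factorial : ℝ) /
            (n.factorial : ℝ)) := by
      apply Finset.sum_nbij' (fun T => T \ (S.erase j)) (fun U => U ∪ S.erase j)
      · intro T hT
        rw [Finset.mem_filter, Finset.mem_powerset] at hT
        rw [Finset.mem_powerset]
        intro x hx
        rw [Finset.mem_sdiff] at hx
        rw [Finset.mem_sdiff]
        refine ⟨Finset.mem_univ x, fun hxS => hx.2 ?_⟩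
        exact Finset.mem_erase.mpr ⟨(Finset.mem_erase.mp (hT.1 hx.1)).1, hxS⟩
      · intro U hU
        rw [Finset.mem_powerset] at hU
        rw [Finset.mem_filter, Finset.mem_powerset]
        constructor
        · intro x hx
          rw [Finset.mem_union] at hx
          rcases hx with hx | hx
          · have := hU hx
            rw [Finset.mem_sdiff] at this
            exact Finset.mem_erase.mpr ⟨fun hxj => this.2 (hxj ▸ hj), this.1⟩
          · exact Finset.mem_erase.mpr ⟨(Finset.mem_erase.mp hx).1, Finset.mem_univ x⟩
        · exact Finset.subset_union_right
      · intro T hT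
        rw [Finset.mem_filter] at hT
        exact Finset.sdiff_union_of_subset hT.2
      · intro U hU
        rw [Finset.mem_powerset] at hU
        apply Finset.union_sdiff_cancel_right
        intro V hV1 hV2 x hx
        have h4 := Finset.mem_sdiff.mp (hU (hV1 hx))
        exact absurd (Finset.mem_erase.mp (hV2 hx)).2 h4.2
      · intro T hT
        rw [Finset.mem_filter, Finset.mem_powerset] at hT
        have hcard : (T \ S.erase j).card + (S.erase j).card = T.card :=
          Finset.card_sdiff_add_card_eq_card hT.2
        rw [Finset.card_erase_of_mem hj] at hcard
        have : (T \ S.erase j).card + t = T.card := by omega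
        rw [this]
    rw [h3, Finset.sum_powerset_apply_card (fun c =>
      (((c + t).factorial : ℝ) * ((n - (c + t) - 1).factorial : ℝ) / (n.factorial : ℝ)))]
    have hcardU : (Finset.univ \ S).card = m := by
      rw [Finset.card_univ_diff]
    rw [hcardU]
    -- Step 3: evaluate the sum
    have h5 : ∀ k ∈ Finset.range (m + 1),
        (m.choose k) • ((((k + t).factorial : ℝ) * ((n - (k + t) - 1).factorial : ℝ) /
          (n.factorial : ℝ)))
        = ((m.choose k * ((t + k).factorial * (m - k).factorial) : ℕ) : ℝ) / (n.factorial : ℝ) := by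
      intro k hk
      rw [Finset.mem_range] at hk
      have e1 : n - (k + t) - 1 = m - k := by omega
      have e2 : k + t = t + k := by omega
      rw [e1, e2, nsmul_eq_mul]
      push_cast
      ring
    rw [Finset.sum_congr rfl h5, ← Finset.sum_div, ← Nat.cast_sum]
    have hkey := key_nat t m
    have hkey' : ((t + 1 : ℕ) : ℝ) * ((∑ k ∈ Finset.range (m + 1),
        m.choose k * ((t + k).factorial * (m - k).factorial) : ℕ) : ℝ)
        = ((t + m + 1).factorial : ℝ) := by exact_mod_cast congrArg Nat.cast hkey
    have hfacpos : (0 : ℝ) < (n.factorial : ℝ) := by positivity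
    have hspos : (0 : ℝ) < (S.card : ℝ) := by exact_mod_cast hs1
    rw [div_eq_div_iff hfacpos.ne' hspos.ne']
    have hnfac : (n.factorial : ℝ) = ((t + m + 1).factorial : ℝ) := by rw [hnm]
    rw [one_mul, hnfac, ← hkey', hst]
    push_cast
    ring
  · rw [if_neg hj, shapley]
    apply Finset.sum_eq_zero
    intro T hT
    simp [unanimity, Finset.subset_insert_iff_of_notMem hj]
end

section
/- Let N be a finite set of players. The family of unanimity games (ω_S), indexed by the nonempty subsets S of N and viewed as elements of the real vector space of functions from Finsets of N to ℝ, is linearly independent over ℝ. -/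
/-- The family of unanimity games `ω_S`, indexed by the nonempty subsets `S`
of the finite player set, is linearly independent in the real vector space of
functions from coalitions to `ℝ`. -/
theorem unanimity_linearIndependent {α : Type*} [Fintype α] [DecidableEq α] :
    LinearIndependent ℝ
      (fun S : {S : Finset α // S.Nonempty} =>
        (fun T : Finset α => if (S : Finset α) ⊆ T then (1 : ℝ) else 0)) := by
  rw [linearIndependent_iff']
  intro s g hsum i hi
  suffices key : ∀ n, ∀ i ∈ s, (i : Finset α).card = n → g i = 0 from
    key _ i hi rfl
  intro n
  induction n using Nat.strong_induction_on with
  | _ n ih =>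
    intro i hi hn
    have h := congrFun hsum (i : Finset α)
    simp only [Finset.sum_apply, Pi.smul_apply, smul_eq_mul, mul_ite, mul_one, mul_zero,
      Pi.zero_apply] at h
    rw [Finset.sum_ite, Finset.sum_const, smul_zero, add_zero] at h
    rw [Finset.sum_eq_single i] at h
    · exact h
    · intro j hj hji
      obtain ⟨hjs, hjsub⟩ := Finset.mem_filter.mp hj
      have hlt : (j : Finset α).card < n :=
        hn ▸ Finset.card_lt_card
          (hjsub.ssubset_of_ne (fun hh => hji (Subtype.ext hh)))
      exact ih _ hlt j hjs rfl
    · intro hni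
      exact absurd (Finset.mem_filter.mpr ⟨hi, Finset.Subset.refl _⟩) hni
end

section
/- Let N be a finite set of players, let ν be a cooperative game on N (so ν(∅) = 0), and let (Δ_T) be the Harsanyi dividends of ν, that is, Δ_T = ∑_{C ⊆ T} (−1)^{|T| − |C|} · ν(C) for nonempty T. Then for every player j ∈ N, the Shapley value of j satisfies φ_j(ν) = ∑_{T ⊆ N, T nonempty, j ∈ T} Δ_T / |T|. -/
open Finset

private lemma shapley_key_identity (r : ℕ) : ∀ m : ℕ, 0 < m →
    ∑ k ∈ Finset.range (r+1), (-1:ℝ)^k * (r.choose k) / (m+k) =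
      (r.factorial * (m-1).factorial) / (m+r).factorial := by
  induction r with
  | zero =>
    intro m hm
    obtain ⟨m, rfl⟩ := Nat.exists_eq_add_of_lt hm
    simp [Nat.factorial_succ]
    rw [eq_div_iff (by positivity)]
    field_simp
  | succ r ih =>
    intro m hm
    have hm' : (0:ℝ) < m := by exact_mod_cast hm
    have hB : ∑ i ∈ Finset.range (r+1),
          (-1:ℝ)^i * (r.choose (i+1) : ℝ) / ((m:ℝ) + ((i+1 : ℕ) : ℝ)) =
        1/(m:ℝ) - ∑ k ∈ Finset.range (r+1), (-1:ℝ)^k * (r.choose k) / (m+k) := by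
      have e : ∑ k ∈ Finset.range (r+2), (-1:ℝ)^k * (r.choose k) / ((m:ℝ)+(k:ℝ))
          = ∑ k ∈ Finset.range (r+1), (-1:ℝ)^k * (r.choose k) / (m+k) := by
        rw [Finset.sum_range_succ]; simp [Nat.choose_succ_self]
      rw [← e, Finset.sum_range_succ'
        (fun k => (-1:ℝ)^k * (r.choose k : ℝ) / ((m:ℝ)+(k:ℝ))) (r+1)]
      have step : ∀ i ∈ Finset.range (r+1),
          (-1:ℝ)^(i+1) * (r.choose (i+1) : ℝ) / ((m:ℝ) + ((i+1 : ℕ) : ℝ)) =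
          -((-1:ℝ)^i * (r.choose (i+1) : ℝ) / ((m:ℝ) + ((i+1 : ℕ) : ℝ))) := by
        intro i _; ring
      rw [Finset.sum_congr rfl step, Finset.sum_neg_distrib]
      simp
    have hS : ∑ k ∈ Finset.range (r+2), (-1:ℝ)^k * ((r+1).choose k) / ((m:ℝ)+(k:ℝ))
        = (∑ k ∈ Finset.range (r+1), (-1:ℝ)^k * (r.choose k) / (m+k))
          - ∑ k ∈ Finset.range (r+1), (-1:ℝ)^k * (r.choose k) / ((m:ℝ)+1+(k:ℝ)) := by
      rw [Finset.sum_range_succ'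
        (fun k => (-1:ℝ)^k * ((r+1).choose k : ℝ) / ((m:ℝ)+(k:ℝ))) (r+1)]
      have step : ∀ i ∈ Finset.range (r+1),
          (-1:ℝ)^(i+1) * ((r+1).choose (i+1) : ℝ) / ((m:ℝ) + ((i+1 : ℕ) : ℝ)) =
          -((-1:ℝ)^i * (r.choose i : ℝ) / ((m:ℝ)+1+(i:ℝ)))
            - (-1:ℝ)^i * (r.choose (i+1) : ℝ) / ((m:ℝ) + ((i+1 : ℕ) : ℝ)) := by
        intro i _
        rw [Nat.choose_succ_succ]
        push_cast
        ring
      rw [Finset.sum_congr rfl step, Finset.sum_sub_distrib, Finset.sum_neg_distrib, hB]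
      simp
      ring
    have ihm1 := ih (m+1) (by positivity)
    push_cast at ihm1
    rw [hS, ih m hm, ihm1]
    have h1 : (m + (r+1)).factorial = (m + r + 1) * (m + r).factorial := by
      rw [show m + (r+1) = (m+r)+1 by ring, Nat.factorial_succ]
    have h2 : (m + 1 - 1) = m := by omega
    have h3 : (m+1+r).factorial = (m + r + 1) * (m+r).factorial := by
      rw [show m+1+r = (m+r)+1 by ring, Nat.factorial_succ]
    have h4 : m.factorial = m * (m-1).factorial := by
      conv_lhs => rw [show m = (m-1)+1 by omega]
      rw [Nat.factorial_succ]
      congr 1; omega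
    rw [h1, h3, h4, Nat.factorial_succ]
    have p1 : (0:ℝ) < (m+r).factorial := by exact_mod_cast Nat.factorial_pos _
    have p2 : (0:ℝ) < (m-1).factorial := by exact_mod_cast Nat.factorial_pos _
    push_cast
    rw [div_sub_div _ _ (by positivity) (by positivity), div_eq_div_iff (by positivity) (by positivity)]
    ring

private lemma shapley_key_identity' (r : ℕ) (m : ℕ) (hm : 0 < m) :
    ∑ k ∈ Finset.range (r+1), (-1:ℝ)^k * (r.choose k) / (m+k) =
      (r.factorial * (m-1).factorial) / (m+r).factorial :=
  shapley_key_identity r m hm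

/-- The Harsanyi dividend of a coalition `T` in the game `ν`:
`Δ_T = ∑_{C ⊆ T} (-1)^{|T| - |C|} ν(C)`. -/
noncomputable def harsanyiDividend {α : Type*} [DecidableEq α]
    (ν : Finset α → ℝ) (T : Finset α) : ℝ :=
  ∑ C ∈ T.powerset, (-1 : ℝ) ^ (T.card - C.card) * ν C

/-- The Shapley value of `j` equals the sum, over all nonempty coalitions `T`
containing `j`, of `Δ_T / |T|`. -/
theorem shapley_eq_sum_harsanyi {α : Type*} [Fintype α] [DecidableEq α]
    (ν : Finset α → ℝ) (hν : ν ∅ = 0) (j : α) :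
    shapley ν j =
      ∑ T ∈ Finset.univ.powerset.filter (fun T => T.Nonempty ∧ j ∈ T),
        harsanyiDividend ν T / (T.card : ℝ) := by
  classical
  set n := Fintype.card α with hn
  set w : ℕ → ℝ := fun s =>
    (s.factorial : ℝ) * ((n - s - 1).factorial : ℝ) / (n.factorial : ℝ) with hw
  set coef : Finset α → ℝ := fun C => if j ∈ C then w (C.card - 1) else - w C.card
    with hcoef
  -- Step A : LHS
  have hLHS : shapley ν j = ∑ C ∈ Finset.univ.powerset, coef C * ν C := by
    have expand : shapley ν j =
        (∑ S ∈ (Finset.univ.erase j).powerset, w S.card * ν (insert j S)) -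
          ∑ S ∈ (Finset.univ.erase j).powerset, w S.card * ν S := by
      rw [shapley, ← Finset.sum_sub_distrib]
      exact Finset.sum_congr rfl fun S _ => by rw [hw]; ring
    have sum1 : ∑ S ∈ (Finset.univ.erase j).powerset, w S.card * ν (insert j S) =
        ∑ C ∈ Finset.univ.powerset.filter (fun C => j ∈ C), coef C * ν C := by
      refine Finset.sum_nbij' (fun S => insert j S) (fun C => C.erase j) ?_ ?_ ?_ ?_ ?_
      · intro S hS
        simp only [Finset.mem_filter, Finset.mem_powerset]
        exact ⟨Finset.subset_univ _, Finset.mem_insert_self _ _⟩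
      · intro C hC
        simp only [Finset.mem_powerset]
        exact Finset.erase_subset_erase _ (Finset.subset_univ _)
      · intro S hS
        apply Finset.erase_insert
        intro hjS
        exact Finset.notMem_erase j Finset.univ (Finset.mem_powerset.1 hS hjS)
      · intro C hC
        exact Finset.insert_erase (Finset.mem_filter.1 hC).2
      · intro S hS
        have hjS : j ∉ S := fun hjS =>
          Finset.notMem_erase j Finset.univ (Finset.mem_powerset.1 hS hjS)
        have : coef (insert j S) = w S.card := by
          rw [hcoef]
          simp [Finset.mem_insert_self, Finset.card_insert_of_notMem hjS]
        rw [this]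
    have sum2 : ∑ S ∈ (Finset.univ.erase j).powerset, w S.card * ν S =
        ∑ C ∈ Finset.univ.powerset.filter (fun C => ¬ j ∈ C), (- coef C) * ν C := by
      have hset : (Finset.univ.erase j).powerset =
          Finset.univ.powerset.filter (fun C => ¬ j ∈ C) := by
        ext S
        simp [Finset.mem_powerset, Finset.subset_erase, Finset.subset_univ]
      rw [hset]
      refine Finset.sum_congr rfl fun C hC => ?_
      have hjC : j ∉ C := (Finset.mem_filter.1 hC).2
      rw [hcoef]
      simp [hjC]
    rw [expand, sum1, sum2, ← Finset.sum_filter_add_sum_filter_not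
      Finset.univ.powerset (fun C => j ∈ C) (fun C => coef C * ν C)]
    have : ∑ C ∈ Finset.univ.powerset.filter (fun C => ¬ j ∈ C), (- coef C) * ν C =
        - ∑ C ∈ Finset.univ.powerset.filter (fun C => ¬ j ∈ C), coef C * ν C := by
      rw [← Finset.sum_neg_distrib]
      exact Finset.sum_congr rfl fun C _ => by ring
    rw [this]
    ring
  -- Step B : RHS
  have filter_eq : Finset.univ.powerset.filter (fun T : Finset α => T.Nonempty ∧ j ∈ T) =
      Finset.univ.powerset.filter (fun T => j ∈ T) := by
    apply Finset.filter_congr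
    intro T _
    exact ⟨fun h => h.2, fun h => ⟨⟨j, h⟩, h⟩⟩
  have hps : ∀ T : Finset α, harsanyiDividend ν T / (T.card : ℝ) =
      ∑ C ∈ Finset.univ.powerset,
        if C ⊆ T then (-1:ℝ)^(T.card - C.card) * ν C / (T.card : ℝ) else 0 := by
    intro T
    rw [harsanyiDividend, Finset.sum_div, ← Finset.sum_filter]
    apply Finset.sum_congr
    · ext C
      simp [Finset.mem_powerset, Finset.subset_univ]
    · intro C _; rfl
  have hRHS : ∑ T ∈ Finset.univ.powerset.filter (fun T => T.Nonempty ∧ j ∈ T),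
        harsanyiDividend ν T / (T.card : ℝ) =
      ∑ C ∈ Finset.univ.powerset, ∑ T ∈ Finset.univ.powerset,
        (if j ∈ T ∧ C ⊆ T then (-1:ℝ)^(T.card - C.card) * ν C / (T.card : ℝ) else 0) := by
    rw [filter_eq, Finset.sum_filter]
    have congr1 : ∀ T ∈ Finset.univ.powerset,
        (if j ∈ T then harsanyiDividend ν T / (T.card : ℝ) else 0) =
        ∑ C ∈ Finset.univ.powerset,
          (if j ∈ T ∧ C ⊆ T then (-1:ℝ)^(T.card - C.card) * ν C / (T.card : ℝ) else 0) := by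
      intro T _
      by_cases hT : j ∈ T
      · simp only [hT, if_true, true_and]
        exact hps T
      · simp [hT]
    rw [Finset.sum_congr rfl congr1, Finset.sum_comm]
  -- per-coalition coefficient identity
  have coefficient : ∀ C ∈ Finset.univ.powerset,
      (∑ T ∈ Finset.univ.powerset,
        (if j ∈ T ∧ C ⊆ T then (-1:ℝ)^(T.card - C.card) * ν C / (T.card : ℝ) else 0))
      = coef C * ν C := by
    intro C _
    set D : Finset α := insert j C with hD
    set M : Finset α := Finset.univ \ D with hM
    have hDsub : ∀ T : Finset α, (j ∈ T ∧ C ⊆ T) ↔ D ⊆ T := by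
      intro T
      rw [hD, Finset.insert_subset_iff]
    have step1 : (∑ T ∈ Finset.univ.powerset,
        (if j ∈ T ∧ C ⊆ T then (-1:ℝ)^(T.card - C.card) * ν C / (T.card : ℝ) else 0))
        = ∑ T ∈ Finset.univ.powerset.filter (fun T => j ∈ T ∧ C ⊆ T),
            (-1:ℝ)^(T.card - C.card) * ν C / (T.card : ℝ) := by
      rw [Finset.sum_filter]
    have step2 : ∑ T ∈ Finset.univ.powerset.filter (fun T => j ∈ T ∧ C ⊆ T),
            (-1:ℝ)^(T.card - C.card) * ν C / (T.card : ℝ)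
        = ∑ K ∈ M.powerset,
            (-1:ℝ)^((K.card + D.card) - C.card) * ν C / ((K.card + D.card : ℕ) : ℝ) := by
      symm
      refine Finset.sum_nbij' (fun K => K ∪ D) (fun T => T \ D) ?_ ?_ ?_ ?_ ?_
      · intro K hK
        rw [Finset.mem_filter, hDsub]
        exact ⟨Finset.mem_powerset.2 (Finset.subset_univ _), Finset.subset_union_right⟩
      · intro T hT
        rw [Finset.mem_powerset, hM]
        exact Finset.sdiff_subset_sdiff (Finset.subset_univ _) (le_refl _)
      · intro K hK
        have hdisj : Disjoint K D := by
          have := Finset.mem_powerset.1 hK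
          rw [hM, Finset.subset_sdiff] at this
          exact this.2
        exact Finset.union_sdiff_cancel_right hdisj
      · intro T hT
        have : D ⊆ T := (hDsub T).1 (Finset.mem_filter.1 hT).2
        exact Finset.sdiff_union_of_subset this
      · intro K hK
        have hdisj : Disjoint K D := by
          have := Finset.mem_powerset.1 hK
          rw [hM, Finset.subset_sdiff] at this
          exact this.2
        rw [Finset.card_union_of_disjoint hdisj]
    have step3 : ∑ K ∈ M.powerset,
            (-1:ℝ)^((K.card + D.card) - C.card) * ν C / ((K.card + D.card : ℕ) : ℝ)
        = ∑ k ∈ Finset.range (M.card + 1), (M.card.choose k : ℝ) *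
            ((-1:ℝ)^((k + D.card) - C.card) * ν C / ((k + D.card : ℕ) : ℝ)) := by
      rw [Finset.sum_powerset_apply_card
        (fun k => (-1:ℝ)^((k + D.card) - C.card) * ν C / ((k + D.card : ℕ) : ℝ))]
      exact Finset.sum_congr rfl fun k _ => by rw [nsmul_eq_mul]
    rw [step1, step2, step3]
    have hCn : C.card ≤ n := by
      rw [hn]; exact Finset.card_le_univ C
    by_cases hjC : j ∈ C
    · -- D = C
      have hDC : D = C := by rw [hD, Finset.insert_eq_self.2 hjC]
      have hc1 : 1 ≤ C.card := Finset.card_pos.2 ⟨j, hjC⟩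
      have hMcard : M.card = n - C.card := by
        rw [hM, hDC, Finset.card_sdiff_of_subset (Finset.subset_univ _), Finset.card_univ, hn]
      have exp_eq : ∀ k : ℕ, (k + C.card) - C.card = k := fun k => by omega
      have : ∑ k ∈ Finset.range (M.card + 1), (M.card.choose k : ℝ) *
            ((-1:ℝ)^((k + D.card) - C.card) * ν C / ((k + D.card : ℕ) : ℝ))
          = (∑ k ∈ Finset.range ((n - C.card) + 1),
              (-1:ℝ)^k * ((n - C.card).choose k : ℝ) / ((C.card : ℝ) + (k:ℝ))) * ν C := by
        rw [Finset.sum_mul, hMcard]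
        refine Finset.sum_congr rfl fun k _ => ?_
        rw [hDC, exp_eq k]
        push_cast
        ring
      rw [this, shapley_key_identity' (n - C.card) C.card hc1]
      have e1 : C.card + (n - C.card) = n := by omega
      have e2 : n - (C.card - 1) - 1 = n - C.card := by omega
      rw [e1, hcoef]
      simp only [hjC, if_true, hw, e2]
      ring
    · -- D = insert j C, card = C.card + 1
      have hDcard : D.card = C.card + 1 := by
        rw [hD, Finset.card_insert_of_notMem hjC]
      have hcn : C.card + 1 ≤ n := by
        have : D.card ≤ n := by rw [hn]; exact Finset.card_le_univ D
        omega
      have hMcard : M.card = n - (C.card + 1) := by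
        rw [hM, Finset.card_sdiff_of_subset (Finset.subset_univ _), Finset.card_univ, hn, hDcard]
      have exp_eq : ∀ k : ℕ, (k + (C.card + 1)) - C.card = k + 1 := fun k => by omega
      have : ∑ k ∈ Finset.range (M.card + 1), (M.card.choose k : ℝ) *
            ((-1:ℝ)^((k + D.card) - C.card) * ν C / ((k + D.card : ℕ) : ℝ))
          = (-(∑ k ∈ Finset.range ((n - (C.card + 1)) + 1),
              (-1:ℝ)^k * ((n - (C.card + 1)).choose k : ℝ) /
                (((C.card + 1 : ℕ) : ℝ) + (k:ℝ)))) * ν C := by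
        rw [neg_mul, Finset.sum_mul, ← Finset.sum_neg_distrib, hMcard]
        refine Finset.sum_congr rfl fun k _ => ?_
        rw [hDcard, exp_eq k, pow_succ]
        push_cast
        ring
      rw [this, shapley_key_identity' (n - (C.card + 1)) (C.card + 1) (Nat.succ_pos _)]
      have e1 : C.card + 1 + (n - (C.card + 1)) = n := by omega
      have e2 : C.card + 1 - 1 = C.card := by omega
      have e3 : n - C.card - 1 = n - (C.card + 1) := by omega
      rw [e1, e2, hcoef]
      simp only [hjC, if_false, hw, e3]
      ring
  rw [hLHS, hRHS]
  exact (Finset.sum_congr rfl coefficient).symm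
end

section
/- Let N be a finite set of players, ν a cooperative game on N (so ν(∅) = 0), and j ∈ N. Suppose every marginal contribution of j is bounded: |ν(π(j) ∪ {j}) − ν(π(j))| ≤ R for all orderings π of N, where R > 0. Let π_1, …, π_k be independent orderings drawn uniformly at random and let φ̃_j = (1/k) ∑_{i=1}^k (ν(π_i(j) ∪ {j}) − ν(π_i(j))) be the sampled Shapley estimator. Then for every t > 0 and δ ∈ (0,1), if k ≥ (2R²/t²) · ln(1/(1−δ)), the probability that φ̃_j − φ_j(ν) ≥ t is at most 1 − δ. -/
open Finset

/-- The set of players that occur strictly before `j` in the ordering `π`. -/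
def preceding {α : Type*} [Fintype α] [DecidableEq α]
    (π : α ≃ Fin (Fintype.card α)) (j : α) : Finset α :=
  Finset.univ.filter (fun i => π i < π j)

/-- The marginal contribution of `j` under the ordering `π`. -/
def marginal {α : Type*} [Fintype α] [DecidableEq α]
    (ν : Finset α → ℝ) (j : α) (π : α ≃ Fin (Fintype.card α)) : ℝ :=
  ν (insert j (preceding π j)) - ν (preceding π j)

section Aux
open Real

private noncomputable def th (x : ℝ) : ℝ := Real.sinh x / Real.cosh x

private lemma th_hasDeriv (x : ℝ) : HasDerivAt th (1 / Real.cosh x ^ 2) x := by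
  have h := (Real.hasDerivAt_sinh x).div (Real.hasDerivAt_cosh x) (Real.cosh_pos x).ne'
  refine h.congr_deriv ?_
  rw [show Real.cosh x * Real.cosh x - Real.sinh x * Real.sinh x = 1 by nlinarith [Real.cosh_sq_sub_sinh_sq x]]

private lemma th_lip {a x : ℝ} (hx : 0 ≤ x) : th (x + a) - th a ≤ x := by
  have hmono : Monotone (fun y => y + th a - th (y + a)) := by
    have hd : ∀ y : ℝ, HasDerivAt (fun y => y + th a - th (y + a)) (1 - 1 / Real.cosh (y + a) ^ 2) y := by
      intro y
      exact ((hasDerivAt_id y).add_const (th a)).sub ((th_hasDeriv (y + a)).comp_add_const (x := y) (a := a))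
    refine monotone_of_deriv_nonneg (fun y => ((hd y).differentiableAt)) ?_
    intro y
    rw [(hd y).deriv]
    have h1 : (1:ℝ) ≤ Real.cosh (y + a) := Real.one_le_cosh _
    have h2 : (1:ℝ) ≤ Real.cosh (y + a) ^ 2 := by nlinarith
    have : 1 / Real.cosh (y + a) ^ 2 ≤ 1 := by
      rw [div_le_one (by positivity)]; exact h2
    linarith
  have := hmono hx
  simpa using this

private lemma log_cosh_bound {a u : ℝ} (hu : 0 ≤ u) :
    Real.cosh (u + a) ≤ Real.cosh a * Real.exp (th a * u + u ^ 2 / 2) := by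
  have key : Real.log (Real.cosh (u + a)) ≤ Real.log (Real.cosh a) + (th a * u + u ^ 2 / 2) := by
    set G : ℝ → ℝ := fun x => th a * x + x ^ 2 / 2 + Real.log (Real.cosh a) - Real.log (Real.cosh (x + a)) with hG
    have hd : ∀ x : ℝ, HasDerivAt G (th a + x - th (x + a)) x := by
      intro x
      have h1 : HasDerivAt (fun x : ℝ => th a * x + x ^ 2 / 2 + Real.log (Real.cosh a)) (th a + x) x := by
        have := (((hasDerivAt_id x).const_mul (th a)).add (((hasDerivAt_pow 2 x)).div_const 2)).add_const (Real.log (Real.cosh a))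
        refine this.congr_deriv ?_; push_cast; ring
      have h2 : HasDerivAt (fun x : ℝ => Real.log (Real.cosh (x + a))) (th (x + a)) x := by
        have hc : HasDerivAt (fun x : ℝ => Real.cosh (x + a)) (Real.sinh (x + a)) x :=
          (Real.hasDerivAt_cosh (x + a)).comp_add_const (x := x) (a := a)
        have := hc.log (Real.cosh_pos (x + a)).ne'
        simpa [th] using this
      exact h1.sub h2
    have hmono : MonotoneOn G (Set.Ici 0) := by
      refine monotoneOn_of_deriv_nonneg (convex_Ici 0) (fun x _ => (hd x).differentiableAt.continuousAt.continuousWithinAt) ?_ ?_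
      · intro x _; exact (hd x).differentiableAt.differentiableWithinAt
      · intro x hx
        rw [interior_Ici] at hx
        rw [(hd x).deriv]
        have := th_lip (a := a) (x := x) (le_of_lt hx)
        linarith
    have hG0 : G 0 = 0 := by simp [hG]
    have := hmono (Set.self_mem_Ici) (Set.mem_Ici.mpr hu) hu
    rw [hG0] at this
    simp only [hG] at this
    linarith
  calc Real.cosh (u + a) = Real.exp (Real.log (Real.cosh (u + a))) := (Real.exp_log (Real.cosh_pos _)).symm
    _ ≤ Real.exp (Real.log (Real.cosh a) + (th a * u + u ^ 2 / 2)) := Real.exp_le_exp.mpr key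
    _ = Real.cosh a * Real.exp (th a * u + u ^ 2 / 2) := by rw [Real.exp_add, Real.exp_log (Real.cosh_pos _)]

private lemma hoeffding_p {p u : ℝ} (hp0 : 0 ≤ p) (hp1 : p ≤ 1) (hu : 0 ≤ u) :
    p * Real.exp u + (1 - p) * Real.exp (-u) ≤ Real.exp ((2 * p - 1) * u + u ^ 2 / 2) := by
  rcases eq_or_lt_of_le hp0 with h0 | h0
  · rw [← h0]
    have : Real.exp (-u) ≤ Real.exp ((2 * 0 - 1) * u + u ^ 2 / 2) := by
      apply Real.exp_le_exp.mpr; nlinarith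
    simpa using this
  · rcases eq_or_lt_of_le hp1 with h1 | h1
    · rw [h1]
      have : Real.exp u ≤ Real.exp ((2 * 1 - 1) * u + u ^ 2 / 2) := by
        apply Real.exp_le_exp.mpr; nlinarith
      simpa using this
    · set q := 1 - p with hq
      have hq0 : 0 < q := by simp [hq]; linarith
      set r := Real.sqrt (p * q) with hr
      have hrpos : 0 < r := Real.sqrt_pos.mpr (by positivity)
      set a := Real.log (Real.sqrt (p / q)) with ha
      have hea : Real.exp a = Real.sqrt (p / q) := Real.exp_log (Real.sqrt_pos.mpr (by positivity))
      have hrea : r * Real.exp a = p := by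
        rw [hea, hr, ← Real.sqrt_mul (by positivity)]
        rw [show p * q * (p / q) = p ^ 2 by field_simp]
        exact Real.sqrt_sq hp0
      have hena : r * Real.exp (-a) = q := by
        rw [Real.exp_neg, hea, hr, ← Real.sqrt_inv, ← Real.sqrt_mul (by positivity)]
        rw [show p * q * (p / q)⁻¹ = q ^ 2 by field_simp]
        exact Real.sqrt_sq hq0.le
      have hsum : 2 * r * Real.cosh a = 1 := by
        rw [Real.cosh_eq]; field_simp; nlinarith [hrea, hena]
      have hth : th a = 2 * p - 1 := by
        have hc : Real.cosh a ≠ 0 := (Real.cosh_pos a).ne'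
        have h1 : r * Real.sinh a = (p - q) / 2 := by
          rw [Real.sinh_eq]; nlinarith [hrea, hena]
        have h2 : r * Real.cosh a = 1 / 2 := by linarith [hsum]
        have hr' : r ≠ 0 := hrpos.ne'
        rw [th, div_eq_iff hc]
        apply mul_left_cancel₀ hr'
        linear_combination h1 - (2 * p - 1) * h2 - (1 / 2) * hq
      have hmain : p * Real.exp u + q * Real.exp (-u) = 2 * r * Real.cosh (u + a) := by
        rw [Real.cosh_eq]
        have e1 : Real.exp (u + a) = Real.exp u * Real.exp a := Real.exp_add u a
        have e2 : Real.exp (-(u + a)) = Real.exp (-u) * Real.exp (-a) := by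
          rw [← Real.exp_add]; ring_nf
        rw [e1, e2]; linear_combination -(Real.exp u) * hrea - Real.exp (-u) * hena - Real.exp (-u) * hq
      calc p * Real.exp u + (1 - p) * Real.exp (-u) = 2 * r * Real.cosh (u + a) := hmain
        _ ≤ 2 * r * (Real.cosh a * Real.exp (th a * u + u ^ 2 / 2)) := by
            apply mul_le_mul_of_nonneg_left (log_cosh_bound hu) (by positivity)
        _ = Real.exp ((2 * p - 1) * u + u ^ 2 / 2) := by
            rw [← hth]; rw [show 2 * r * (Real.cosh a * Real.exp (th a * u + u ^ 2 / 2)) = (2 * r * Real.cosh a) * Real.exp (th a * u + u ^ 2 / 2) by ring, hsum, one_mul]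

end Aux

section Aux2
variable {α : Type*} [Fintype α] [DecidableEq α]

private lemma pij_val (j : α) (π : α ≃ Fin (Fintype.card α)) :
    ((π j : Fin (Fintype.card α)) : ℕ) = (preceding π j).card := by
  rw [preceding]
  rw [show (Finset.univ.filter (fun i => π i < π j)).card = (Finset.Iio (π j)).card from ?_]
  · rw [Fin.card_Iio]
  · apply Finset.card_bij (fun i _ => π i)
    · intro a ha; simp only [Finset.mem_filter] at ha; simpa using ha.2
    · intro a _ b _ h; exact π.injective h
    · intro b hb; exact ⟨π.symm b, by simpa using hb, by simp⟩

private lemma gt_of_not_mem (j : α) (π : α ≃ Fin (Fintype.card α)) {i : α}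
    (hij : i ≠ j) (hiS : i ∉ preceding π j) : π j < π i := by
  rcases lt_trichotomy (π i) (π j) with h | h | h
  · exact absurd (by simpa [preceding] using h) hiS
  · exact absurd (π.injective h) hij
  · exact h

private lemma count_fiber (j : α) (S : Finset α) (hS : S ⊆ Finset.univ.erase j) :
    ((Finset.univ : Finset (α ≃ Fin (Fintype.card α))).filter
        (fun π => preceding π j = S)).card
      = S.card.factorial * (Fintype.card α - S.card - 1).factorial := by
  classical
  set n := Fintype.card α with hn
  set s := S.card with hs
  set T := (Finset.univ.erase j) \ S with hT
  have hjS : j ∉ S := fun h => by simpa using (Finset.mem_erase.mp (hS h)).1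
  have hn1 : 1 ≤ n := Fintype.card_pos_iff.mpr ⟨j⟩
  have hsle : s ≤ n - 1 := by
    calc s ≤ (Finset.univ.erase j).card := Finset.card_le_card hS
    _ = n - 1 := by rw [Finset.card_erase_of_mem (Finset.mem_univ j), Finset.card_univ]
  have hTcard : T.card = n - s - 1 := by
    rw [hT, Finset.card_sdiff_of_subset hS, Finset.card_erase_of_mem (Finset.mem_univ j),
      Finset.card_univ, ← hn, ← hs, Nat.sub_sub, Nat.sub_sub, Nat.add_comm]
  have hmemT : ∀ i : α, i ∉ S → i ≠ j → i ∈ T := by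
    intro i h1 h2; rw [hT]; simp [h1, h2]
  have hTj : j ∉ T := by rw [hT]; simp
  have hTS : ∀ i, i ∈ T → i ∉ S := by intro i hi; rw [hT] at hi; exact (Finset.mem_sdiff.mp hi).2
  have hTne : ∀ i, i ∈ T → i ≠ j := by
    intro i hi; rw [hT] at hi
    exact (Finset.mem_erase.mp (Finset.mem_sdiff.mp hi).1).1
  have hresolve : ∀ i : α, i ∉ S → i ∉ T → i = j := by
    intro i h1 h2; by_contra h; exact h2 (hmemT i h1 h)
  rw [← Fintype.card_subtype]
  have key : ∀ (π : α ≃ Fin n), preceding π j = S → ((π j : Fin n) : ℕ) = s := by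
    intro π hπ; rw [pij_val, hπ]
  have memS_lt : ∀ (π : α ≃ Fin n) (hπ : preceding π j = S) (i : α), i ∈ S → ((π i : Fin n) : ℕ) < s := by
    intro π hπ i hi
    have h1 : i ∈ preceding π j := by rw [hπ]; exact hi
    have h2 : (π i : ℕ) < (π j : ℕ) := (Finset.mem_filter.mp h1).2
    have h3 := key π hπ
    omega
  have memT_gt : ∀ (π : α ≃ Fin n) (hπ : preceding π j = S) (i : α), i ∈ T → s < ((π i : Fin n) : ℕ) := by
    intro π hπ i hi
    have h2 := gt_of_not_mem j π (hTne i hi) (by rw [hπ]; exact hTS i hi)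
    have h3 := key π hπ
    have : (π j : ℕ) < (π i : ℕ) := h2
    omega
  let Φ : {π : α ≃ Fin n // preceding π j = S} → ((↥S ≃ Fin s) × (↥T ≃ Fin (n - s - 1))) :=
    fun π =>
      (Equiv.ofBijective (fun i : ↥S => (⟨(π.1 i : ℕ), memS_lt π.1 π.2 i i.2⟩ : Fin s))
        (by
          refine (Fintype.bijective_iff_injective_and_card _).mpr ⟨?_, by simp [hs]⟩
          intro a b hab
          have := congrArg Fin.val hab
          exact Subtype.ext (π.1.injective (Fin.ext this))),
       Equiv.ofBijective (fun i : ↥T => (⟨(π.1 i : ℕ) - s - 1, by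
            have h1 := memT_gt π.1 π.2 i i.2
            have h2 := (π.1 i).isLt
            omega⟩ : Fin (n - s - 1)))
        (by
          refine (Fintype.bijective_iff_injective_and_card _).mpr ⟨?_, by simp [hTcard]⟩
          intro a b hab
          have hv := congrArg Fin.val hab
          simp only at hv
          have h1 := memT_gt π.1 π.2 a a.2
          have h2 := memT_gt π.1 π.2 b b.2
          exact Subtype.ext (π.1.injective (Fin.ext (by omega)))))
  have hΦbij : Function.Bijective Φ := by
    constructor
    · intro π₁ π₂ h
      have h1 : (Φ π₁).1 = (Φ π₂).1 := by rw [h]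
      have h2 : (Φ π₁).2 = (Φ π₂).2 := by rw [h]
      refine Subtype.ext (Equiv.ext fun i => ?_)
      by_cases hi : i ∈ S
      · have hv := congrArg Fin.val (DFunLike.congr_fun h1 (⟨i, hi⟩ : ↥S))
        simp only [Φ, Equiv.ofBijective, Equiv.coe_fn_mk] at hv
        exact Fin.ext hv
      · by_cases hiT : i ∈ T
        · have hv := congrArg Fin.val (DFunLike.congr_fun h2 (⟨i, hiT⟩ : ↥T))
          simp only [Φ, Equiv.ofBijective, Equiv.coe_fn_mk] at hv
          have g1 := memT_gt π₁.1 π₁.2 i hiT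
          have g2 := memT_gt π₂.1 π₂.2 i hiT
          exact Fin.ext (by omega)
        · have hij := hresolve i hi hiT
          subst hij
          exact Fin.ext (by rw [key π₁.1 π₁.2, key π₂.1 π₂.2])
    · rintro ⟨f, g⟩
      have hFdef : ∀ i : α, i ∈ S ∨ i ∈ T ∨ i = j := by
        intro i
        by_cases h1 : i ∈ S
        · exact Or.inl h1
        · by_cases h2 : i ∈ T
          · exact Or.inr (Or.inl h2)
          · exact Or.inr (Or.inr (hresolve i h1 h2))
      let F : α → Fin n := fun i =>
        if h : i ∈ S then ⟨(f ⟨i, h⟩ : ℕ), (f ⟨i, h⟩).isLt.trans_le (by omega)⟩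
        else if h' : i ∈ T then ⟨s + 1 + (g ⟨i, h'⟩ : ℕ), by
          have := (g ⟨i, h'⟩).isLt; omega⟩
        else ⟨s, by omega⟩
      have hFS : ∀ (i : α) (h : i ∈ S), (F i : ℕ) = (f ⟨i, h⟩ : ℕ) := by
        intro i h; simp only [F, dif_pos h]
      have hFT : ∀ (i : α) (h : i ∈ T), (F i : ℕ) = s + 1 + (g ⟨i, h⟩ : ℕ) := by
        intro i h
        have : i ∉ S := hTS i h
        simp only [F, dif_neg this, dif_pos h]
      have hFj : (F j : ℕ) = s := by
        simp only [F, dif_neg hjS, dif_neg hTj]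
      have hFinj : Function.Injective F := by
        intro a b hab
        have hv := congrArg Fin.val hab
        rcases hFdef a with ha | ha | ha <;> rcases hFdef b with hb | hb | hb
        · rw [hFS a ha, hFS b hb] at hv
          have : (⟨a, ha⟩ : ↥S) = ⟨b, hb⟩ := f.injective (Fin.ext hv)
          exact congrArg Subtype.val this
        · rw [hFS a ha, hFT b hb] at hv
          exact absurd hv (by exfalso; have := (f ⟨a, ha⟩).isLt; omega)
        · subst hb; rw [hFS a ha, hFj] at hv
          exact absurd hv (by exfalso; have := (f ⟨a, ha⟩).isLt; omega)
        · rw [hFT a ha, hFS b hb] at hv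
          exact absurd hv (by exfalso; have := (f ⟨b, hb⟩).isLt; omega)
        · rw [hFT a ha, hFT b hb] at hv
          have : (⟨a, ha⟩ : ↥T) = ⟨b, hb⟩ := g.injective (Fin.ext (by omega))
          exact congrArg Subtype.val this
        · subst hb; rw [hFT a ha, hFj] at hv
          exact absurd hv (by exfalso; omega)
        · subst ha; rw [hFj, hFS b hb] at hv
          exact absurd hv (by exfalso; have := (f ⟨b, hb⟩).isLt; omega)
        · subst ha; rw [hFj, hFT b hb] at hv
          exact absurd hv (by exfalso; omega)
        · subst ha; subst hb; rfl
      have hFbij : Function.Bijective F :=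
        (Fintype.bijective_iff_injective_and_card F).mpr ⟨hFinj, by simp [hn]⟩
      let π₀ : α ≃ Fin n := Equiv.ofBijective F hFbij
      have hπ₀app : ∀ i : α, π₀ i = F i := fun i => rfl
      have hπ₀ : preceding π₀ j = S := by
        ext i
        simp only [preceding, Finset.mem_filter, Finset.mem_univ, true_and]
        rw [Fin.lt_def, hπ₀app, hπ₀app, hFj]
        constructor
        · intro hlt
          rcases hFdef i with h | h | h
          · exact h
          · rw [hFT i h] at hlt; omega
          · subst h; rw [hFj] at hlt; omega
        · intro h
          rw [hFS i h]
          exact (f ⟨i, h⟩).isLt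
      refine ⟨⟨π₀, hπ₀⟩, ?_⟩
      have hc1 : (Φ ⟨π₀, hπ₀⟩).1 = f := by
        refine Equiv.ext fun i => Fin.ext ?_
        show ((π₀ i : Fin n) : ℕ) = (f i : ℕ)
        rw [hπ₀app, hFS i i.2, Subtype.eta]
      have hc2 : (Φ ⟨π₀, hπ₀⟩).2 = g := by
        refine Equiv.ext fun i => Fin.ext ?_
        show ((π₀ i : Fin n) : ℕ) - s - 1 = (g i : ℕ)
        rw [hπ₀app, hFT i i.2, Subtype.eta]
        omega
      exact Prod.ext hc1 hc2
  rw [Fintype.card_of_bijective hΦbij, Fintype.card_prod,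
    Fintype.card_equiv (Fintype.equivFinOfCardEq (by simp [hs])),
    Fintype.card_equiv (Fintype.equivFinOfCardEq (by simp [hTcard])),
    Fintype.card_coe, Fintype.card_coe, hTcard, ← hs]

private lemma sum_marginal (ν : Finset α → ℝ) (j : α) :
    ∑ π : α ≃ Fin (Fintype.card α), marginal ν j π
      = ((Fintype.card α).factorial : ℝ) * shapley ν j := by
  classical
  have hmaps : ∀ π : α ≃ Fin (Fintype.card α), π ∈ (Finset.univ : Finset _) →
      preceding π j ∈ (Finset.univ.erase j).powerset := by
    intro π _
    rw [Finset.mem_powerset]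
    intro i hi
    rw [preceding, Finset.mem_filter] at hi
    refine Finset.mem_erase.mpr ⟨?_, Finset.mem_univ i⟩
    intro h; rw [h] at hi; exact lt_irrefl _ hi.2
  rw [← Finset.sum_fiberwise_of_maps_to hmaps (fun π => marginal ν j π)]
  rw [shapley, Finset.mul_sum]
  refine Finset.sum_congr rfl ?_
  intro S hS
  have hS' : S ⊆ Finset.univ.erase j := Finset.mem_powerset.mp hS
  have hcongr : ∀ π ∈ (Finset.univ.filter (fun π => preceding π j = S)),
      marginal ν j π = ν (insert j S) - ν S := by
    intro π hπ
    rw [marginal, (Finset.mem_filter.mp hπ).2]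
  rw [Finset.sum_congr rfl hcongr, Finset.sum_const, count_fiber j S hS', nsmul_eq_mul]
  have hne : ((Fintype.card α).factorial : ℝ) ≠ 0 := Nat.cast_ne_zero.mpr (Nat.factorial_ne_zero _)
  push_cast
  field_simp

private lemma mgf_single (ν : Finset α → ℝ) (j : α) (R lam : ℝ) (hR : 0 < R) (hlam : 0 ≤ lam)
    (hbound : ∀ π : α ≃ Fin (Fintype.card α), |marginal ν j π| ≤ R) :
    ∑ π : α ≃ Fin (Fintype.card α), Real.exp (lam * (marginal ν j π - shapley ν j))
      ≤ ((Fintype.card α).factorial : ℝ) * Real.exp (lam ^ 2 * R ^ 2 / 2) := by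
  classical
  set n := Fintype.card α with hn
  set μ := shapley ν j with hμ
  set m := marginal ν j with hm
  have hcardE : (Fintype.card (α ≃ Fin n)) = n.factorial := by
    rw [Fintype.card_equiv (Fintype.equivFin α), hn]
  have hfac : (0:ℝ) < (n.factorial : ℝ) := by positivity
  have hsum : ∑ π : α ≃ Fin n, m π = (n.factorial : ℝ) * μ := sum_marginal ν j
  have hμabs : |μ| ≤ R := by
    have h1 : |∑ π : α ≃ Fin n, m π| ≤ ∑ π : α ≃ Fin n, R := by
      refine (Finset.abs_sum_le_sum_abs _ _).trans (Finset.sum_le_sum fun π _ => hbound π)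
    rw [hsum, Finset.sum_const, Finset.card_univ, hcardE, nsmul_eq_mul, abs_mul,
      abs_of_pos hfac] at h1
    exact le_of_mul_le_mul_left h1 hfac
  -- pointwise convexity bound
  set u := lam * R with hu
  have hconv : ∀ x : ℝ, |x| ≤ R → Real.exp (lam * x)
      ≤ ((R - x) / (2 * R)) * Real.exp (-u) + ((R + x) / (2 * R)) * Real.exp u := by
    intro x hx
    have hx1 : -R ≤ x := neg_le_of_abs_le hx
    have hx2 : x ≤ R := le_of_abs_le hx
    have ha : (0:ℝ) ≤ (R - x) / (2 * R) := div_nonneg (by linarith) (by positivity)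
    have hb : (0:ℝ) ≤ (R + x) / (2 * R) := div_nonneg (by linarith) (by positivity)
    have hab : (R - x) / (2 * R) + (R + x) / (2 * R) = 1 := by field_simp; ring
    have := convexOn_exp.2 (Set.mem_univ (-u)) (Set.mem_univ u) ha hb hab
    simp only [smul_eq_mul] at this
    have harg : (R - x) / (2 * R) * (-u) + (R + x) / (2 * R) * u = lam * x := by
      rw [hu]; field_simp; ring
    rwa [harg] at this
  have hp0 : (0:ℝ) ≤ (R + μ) / (2 * R) := by
    have := neg_le_of_abs_le hμabs
    exact div_nonneg (by linarith) (by positivity)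
  have hp1 : (R + μ) / (2 * R) ≤ 1 := by
    have := le_of_abs_le hμabs
    rw [div_le_one (by positivity)]; linarith
  have hq : 1 - (R + μ) / (2 * R) = (R - μ) / (2 * R) := by field_simp; ring
  have husign : 0 ≤ u := by positivity
  have step1 : ∑ π : α ≃ Fin n, Real.exp (lam * m π)
      ≤ (n.factorial : ℝ) * (((R + μ) / (2 * R)) * Real.exp u + ((R - μ) / (2 * R)) * Real.exp (-u)) := by
    calc ∑ π : α ≃ Fin n, Real.exp (lam * m π)
        ≤ ∑ π : α ≃ Fin n, (((R - m π) / (2 * R)) * Real.exp (-u) + ((R + m π) / (2 * R)) * Real.exp u) :=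
          Finset.sum_le_sum fun π _ => hconv (m π) (hbound π)
      _ = (n.factorial : ℝ) * (((R + μ) / (2 * R)) * Real.exp u + ((R - μ) / (2 * R)) * Real.exp (-u)) := by
          rw [Finset.sum_add_distrib, ← Finset.sum_mul, ← Finset.sum_mul]
          have e1 : ∑ i : α ≃ Fin n, (R - m i) / (2 * R)
              = ((n.factorial : ℝ) * R - (n.factorial : ℝ) * μ) / (2 * R) := by
            rw [← Finset.sum_div, Finset.sum_sub_distrib, hsum, Finset.sum_const,
              Finset.card_univ, hcardE, nsmul_eq_mul]
          have e2 : ∑ i : α ≃ Fin n, (R + m i) / (2 * R)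
              = ((n.factorial : ℝ) * R + (n.factorial : ℝ) * μ) / (2 * R) := by
            rw [← Finset.sum_div, Finset.sum_add_distrib, hsum, Finset.sum_const,
              Finset.card_univ, hcardE, nsmul_eq_mul]
          rw [e1, e2]
          field_simp
          ring
  have step2 : ((R + μ) / (2 * R)) * Real.exp u + ((R - μ) / (2 * R)) * Real.exp (-u)
      ≤ Real.exp (lam * μ + lam ^ 2 * R ^ 2 / 2) := by
    have h := hoeffding_p hp0 hp1 husign
    rw [hq] at h
    have harg : (2 * ((R + μ) / (2 * R)) - 1) * u + u ^ 2 / 2 = lam * μ + lam ^ 2 * R ^ 2 / 2 := by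
      rw [hu]; field_simp; ring
    rwa [harg] at h
  calc ∑ π : α ≃ Fin n, Real.exp (lam * (m π - μ))
      = (∑ π : α ≃ Fin n, Real.exp (lam * m π)) * Real.exp (-(lam * μ)) := by
        rw [Finset.sum_mul]
        refine Finset.sum_congr rfl fun π _ => ?_
        rw [← Real.exp_add]; ring_nf
    _ ≤ ((n.factorial : ℝ) * Real.exp (lam * μ + lam ^ 2 * R ^ 2 / 2)) * Real.exp (-(lam * μ)) := by
        apply mul_le_mul_of_nonneg_right _ (Real.exp_nonneg _)
        exact step1.trans (mul_le_mul_of_nonneg_left step2 hfac.le)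
    _ = (n.factorial : ℝ) * Real.exp (lam ^ 2 * R ^ 2 / 2) := by
        rw [mul_assoc, ← Real.exp_add]; ring_nf


end Aux2

open scoped Classical in
/-- Hoeffding-type guarantee for the sampled Shapley estimator: if every
marginal contribution of `j` is bounded in absolute value by `R > 0`, and
`π_1, …, π_k` are i.i.d. uniform orderings (modelled by the uniform counting
probability on the product space of `k`-tuples of orderings), then for every
`t > 0` and `δ ∈ (0,1)`, provided `k ≥ (2R²/t²)·ln(1/(1-δ))`, the probability
that the estimator `φ̃_j = (1/k) ∑_i (ν(π_i(j) ∪ {j}) - ν(π_i(j)))` exceeds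
`φ_j(ν)` by at least `t` is at most `1 - δ`. -/
theorem sampled_shapley_concentration {α : Type*} [Fintype α] [DecidableEq α]
    (ν : Finset α → ℝ) (hν : ν ∅ = 0) (j : α) (R : ℝ) (hR : 0 < R)
    (hbound : ∀ π : α ≃ Fin (Fintype.card α), |marginal ν j π| ≤ R)
    (k : ℕ) (t δ : ℝ) (ht : 0 < t) (hδ : δ ∈ Set.Ioo (0 : ℝ) 1)
    (hk : (k : ℝ) ≥ 2 * R ^ 2 / t ^ 2 * Real.log (1 / (1 - δ))) :
    (((Finset.univ : Finset (Fin k → (α ≃ Fin (Fintype.card α)))).filter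
        (fun ω => (1 / (k : ℝ)) * ∑ i : Fin k, marginal ν j (ω i)
          - shapley ν j ≥ t)).card : ℝ)
      / (Fintype.card (Fin k → (α ≃ Fin (Fintype.card α))) : ℝ)
      ≤ 1 - δ := by
  obtain ⟨hδ0, hδ1⟩ := hδ
  have h1δ : 0 < 1 - δ := by linarith
  have hlogpos : 0 < Real.log (1 / (1 - δ)) :=
    Real.log_pos (one_lt_one_div h1δ (by linarith))
  have hkpos : (0:ℝ) < (k:ℝ) := lt_of_lt_of_le (by positivity) hk
  have hk0 : k ≠ 0 := by exact_mod_cast hkpos.ne'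
  set n := Fintype.card α with hn
  set μ := shapley ν j with hμ
  set m := marginal ν j with hm
  set N := n.factorial with hN
  have hNpos : (0:ℝ) < (N:ℝ) := by positivity
  set lam := t / R ^ 2 with hlam_def
  have hlam : 0 < lam := by positivity
  have hmgf := mgf_single ν j R lam hR hlam.le hbound
  have hcardE : (Fintype.card (α ≃ Fin n)) = N := by
    rw [Fintype.card_equiv (Fintype.equivFin α), ← hn]
  have hcardfun : (Fintype.card (Fin k → (α ≃ Fin n))) = N ^ k := by
    rw [Fintype.card_fun, hcardE, Fintype.card_fin]
  set P := (Finset.univ : Finset (Fin k → (α ≃ Fin n))).filter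
      (fun ω => (1 / (k : ℝ)) * ∑ i : Fin k, m (ω i) - μ ≥ t) with hP
  have markov : (P.card : ℝ) * Real.exp (lam * ((k:ℝ) * t))
      ≤ ∑ ω : Fin k → (α ≃ Fin n), Real.exp (lam * ∑ i : Fin k, (m (ω i) - μ)) := by
    have h1 : ∀ ω ∈ P, Real.exp (lam * ((k:ℝ) * t)) ≤ Real.exp (lam * ∑ i : Fin k, (m (ω i) - μ)) := by
      intro ω hω
      apply Real.exp_le_exp.mpr
      apply mul_le_mul_of_nonneg_left ?_ hlam.le
      have hev := (Finset.mem_filter.mp hω).2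
      have hsplit : ∑ i : Fin k, (m (ω i) - μ) = (∑ i : Fin k, m (ω i)) - (k:ℝ) * μ := by
        rw [Finset.sum_sub_distrib, Finset.sum_const, Finset.card_univ, Fintype.card_fin,
          nsmul_eq_mul]
      rw [hsplit]
      have h2 : (k:ℝ) * ((1/(k:ℝ)) * (∑ i : Fin k, m (ω i)) - μ) ≥ (k:ℝ) * t :=
        mul_le_mul_of_nonneg_left hev hkpos.le
      have h3 : (k:ℝ) * ((1/(k:ℝ)) * (∑ i : Fin k, m (ω i))) = ∑ i : Fin k, m (ω i) := by
        field_simp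
      nlinarith [h2, h3]
    calc (P.card : ℝ) * Real.exp (lam * ((k:ℝ) * t))
        = ∑ _ω ∈ P, Real.exp (lam * ((k:ℝ) * t)) := by
          rw [Finset.sum_const, nsmul_eq_mul]
      _ ≤ ∑ ω ∈ P, Real.exp (lam * ∑ i : Fin k, (m (ω i) - μ)) := Finset.sum_le_sum h1
      _ ≤ ∑ ω : Fin k → (α ≃ Fin n), Real.exp (lam * ∑ i : Fin k, (m (ω i) - μ)) :=
          Finset.sum_le_sum_of_subset_of_nonneg (Finset.filter_subset _ _)
            (fun _ _ _ => (Real.exp_nonneg _))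
  have hprod : ∑ ω : Fin k → (α ≃ Fin n), Real.exp (lam * ∑ i : Fin k, (m (ω i) - μ))
      = (∑ π : α ≃ Fin n, Real.exp (lam * (m π - μ))) ^ k := by
    have hpt : ∀ ω : Fin k → (α ≃ Fin n), Real.exp (lam * ∑ i : Fin k, (m (ω i) - μ))
        = ∏ i : Fin k, Real.exp (lam * (m (ω i) - μ)) := by
      intro ω; rw [Finset.mul_sum, Real.exp_sum]
    rw [Finset.sum_congr rfl (fun ω _ => hpt ω), Finset.sum_pow', Fintype.piFinset_univ]
  have hchain : (P.card : ℝ) * Real.exp (lam * ((k:ℝ) * t))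
      ≤ ((N:ℝ) * Real.exp (lam ^ 2 * R ^ 2 / 2)) ^ k := by
    refine markov.trans ?_
    rw [hprod]
    exact pow_le_pow_left₀ (Finset.sum_nonneg fun _ _ => Real.exp_nonneg _) hmgf k
  have hrhs : ((N:ℝ) * Real.exp (lam ^ 2 * R ^ 2 / 2)) ^ k
      = (N:ℝ) ^ k * Real.exp ((k:ℝ) * (lam ^ 2 * R ^ 2 / 2)) := by
    rw [mul_pow, ← Real.exp_nat_mul]
  have hPbound : (P.card : ℝ) ≤ (N:ℝ) ^ k * Real.exp (-((k:ℝ) * t ^ 2 / (2 * R ^ 2))) := by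
    have hexp_pos : (0:ℝ) < Real.exp (lam * ((k:ℝ) * t)) := Real.exp_pos _
    rw [hrhs] at hchain
    have := (le_div_iff₀ hexp_pos).mpr hchain
    rw [mul_div_assoc, ← Real.exp_sub] at this
    have harg : (k:ℝ) * (lam ^ 2 * R ^ 2 / 2) - lam * ((k:ℝ) * t)
        = -((k:ℝ) * t ^ 2 / (2 * R ^ 2)) := by
      rw [hlam_def]; field_simp; ring
    rwa [harg] at this
  have hfinal : Real.exp (-((k:ℝ) * t ^ 2 / (2 * R ^ 2))) ≤ 1 - δ := by
    rw [show (1:ℝ) - δ = Real.exp (Real.log (1 - δ)) from (Real.exp_log h1δ).symm]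
    apply Real.exp_le_exp.mpr
    have hlog : Real.log (1 / (1 - δ)) = -Real.log (1 - δ) := by
      rw [one_div, Real.log_inv]
    rw [hlog] at hk
    have hmul : (k:ℝ) * (t ^ 2 / (2 * R ^ 2)) ≥ (2 * R ^ 2 / t ^ 2) * (-Real.log (1 - δ)) * (t ^ 2 / (2 * R ^ 2)) :=
      mul_le_mul_of_nonneg_right hk (by positivity)
    have hsimp : (2 * R ^ 2 / t ^ 2) * (-Real.log (1 - δ)) * (t ^ 2 / (2 * R ^ 2)) = -Real.log (1 - δ) := by
      field_simp
    rw [hsimp] at hmul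
    have : (k:ℝ) * t ^ 2 / (2 * R ^ 2) = (k:ℝ) * (t ^ 2 / (2 * R ^ 2)) := by ring
    rw [this]
    linarith
  rw [hcardfun]
  rw [div_le_iff₀ (by positivity)]
  push_cast
  calc (P.card : ℝ) ≤ (N:ℝ) ^ k * Real.exp (-((k:ℝ) * t ^ 2 / (2 * R ^ 2))) := hPbound
    _ ≤ (N:ℝ) ^ k * (1 - δ) := mul_le_mul_of_nonneg_left hfinal (by positivity)
    _ = (1 - δ) * ((N:ℝ) ^ k) := by push_cast; ring
end

section
/- Let q be a positive natural number and consider N = Fin q × Fin q. For x ∈ Fin q let B⁰_x = {(x, c) : c ∈ Fin q} and B¹_x = {(r, r + x) : r ∈ Fin q} (addition modulo q), and let d_x = (x, x + x) be the unique element of B⁰_x ∩ B¹_x. For a subset S ⊆ Fin q, define T_S = ⋃_{x ∈ S} (B⁰_x ∪ B¹_x). Then for all x ∈ Fin q, d_x ∈ T_S if and only if x ∈ S; consequently the map S ↦ T_S from subsets of Fin q to subsets of N is injective. -/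
open Finset

/-- The row bundle `B⁰_x = {(x, c) : c ∈ Fin q}`. -/
def rowBundle {q : ℕ} (x : Fin q) : Finset (Fin q × Fin q) :=
  Finset.univ.image (fun c => (x, c))

/-- The transversal bundle `B¹_x = {(r, r + x) : r ∈ Fin q}` (addition mod `q`). -/
def transBundle {q : ℕ} (x : Fin q) : Finset (Fin q × Fin q) :=
  Finset.univ.image (fun r => (r, r + x))

/-- `T_S = ⋃_{x ∈ S} (B⁰_x ∪ B¹_x)`. -/
def bundleUnion {q : ℕ} (S : Finset (Fin q)) : Finset (Fin q × Fin q) :=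
  S.biUnion (fun x => rowBundle x ∪ transBundle x)

lemma diag_mem_iff {q : ℕ} (S : Finset (Fin q)) (x : Fin q) :
    ((x, x + x) ∈ bundleUnion S ↔ x ∈ S) := by
  constructor
  · intro h
    simp only [bundleUnion, mem_biUnion, mem_union, rowBundle, transBundle,
      mem_image, mem_univ, true_and, Prod.mk.injEq] at h
    obtain ⟨y, hy, h | h⟩ := h
    · obtain ⟨c, hc1, _⟩ := h
      rwa [← hc1]
    · obtain ⟨r, hr1, hr2⟩ := h
      subst hr1
      have hy' : y = r := add_left_cancel hr2
      rwa [hy'] at hy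
  · intro hx
    simp only [bundleUnion, mem_biUnion]
    refine ⟨x, hx, ?_⟩
    simp [rowBundle, transBundle]

/-- The diagonal element `d_x = (x, x + x)` belongs to `T_S` iff `x ∈ S`;
consequently `S ↦ T_S` is injective. -/
theorem bundleUnion_injective (q : ℕ) (hq : 0 < q) :
    (∀ (S : Finset (Fin q)) (x : Fin q),
      ((x, x + x) ∈ bundleUnion S ↔ x ∈ S)) ∧
    Function.Injective (fun S : Finset (Fin q) => bundleUnion S) := by
  refine ⟨diag_mem_iff, ?_⟩
  intro S T h
  ext x
  rw [← diag_mem_iff S x, ← diag_mem_iff T x]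
  simp only at h
  rw [h]
end

section
/- Let q be a positive natural number. For i ∈ {1, …, q}, set the bid values b⁰_i = 3^{2q − 2i + 1} and b¹_i = 3^{2q − 2i}. For a nonempty subset S ⊆ {1, …, q}, define g(S) = ∑_{x ∈ S} b¹_x − ∑_{x ∈ S} b⁰_x + b⁰_{min S}, where min S is the least element of S. Then g is injective on the nonempty subsets of {1, …, q}; consequently the set {g(S) : ∅ ≠ S ⊆ {1, …, q}} has cardinality exactly 2^q − 1. -/
open Finset

/-- With bids `b⁰_i = 3^(2q-2i+1)` and `b¹_i = 3^(2q-2i)`, the marginal value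
associated with a nonempty set `S ⊆ {1, …, q}` of selected row bundles:
`g(S) = ∑_{x ∈ S} b¹_x - ∑_{x ∈ S} b⁰_x + b⁰_{min S}`. -/
def marginalValue (q : ℕ) (S : Finset ℕ) : ℤ :=
  (∑ x ∈ S, (3 : ℤ) ^ (2 * q - 2 * x)) - (∑ x ∈ S, (3 : ℤ) ^ (2 * q - 2 * x + 1))
    + if h : S.Nonempty then (3 : ℤ) ^ (2 * q - 2 * S.min' h + 1) else 0

lemma geom9_lt (n : ℕ) : ∑ x ∈ range n, (9:ℕ)^x < 9 ^ n := by
  induction n with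
  | zero => simp
  | succ n ih =>
    rw [Finset.sum_range_succ, pow_succ]
    nlinarith [pow_pos (by norm_num : 0 < (9:ℕ)) n]

lemma sum_pow9_lt {n : ℕ} {S : Finset ℕ} (h : S ⊆ range n) :
    ∑ x ∈ S, (9:ℕ)^x < 9 ^ n :=
  lt_of_le_of_lt (Finset.sum_le_sum_of_subset h) (geom9_lt n)

lemma pow9_sum_inj : ∀ n : ℕ, ∀ S T : Finset ℕ, S ⊆ range n → T ⊆ range n →
    (∑ x ∈ S, (9:ℕ)^x = ∑ x ∈ T, 9^x) → S = T := by
  intro n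
  induction n with
  | zero =>
    intro S T hS hT _
    simp only [range_zero, subset_empty] at hS hT
    rw [hS, hT]
  | succ n ih =>
    intro S T hS hT hsum
    have hlt : ∀ U : Finset ℕ, U ⊆ range (n+1) → n ∉ U → ∑ x ∈ U, (9:ℕ)^x < 9^n := by
      intro U hU hnU
      refine sum_pow9_lt (fun x hx => ?_)
      have := hU hx
      simp only [mem_range] at this ⊢
      rcases Nat.lt_succ_iff_lt_or_eq.mp this with h | h
      · exact h
      · exact absurd (h ▸ hx) hnU
    have hge : ∀ U : Finset ℕ, n ∈ U → 9^n ≤ ∑ x ∈ U, (9:ℕ)^x := by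
      intro U hn
      exact Finset.single_le_sum (f := fun x => (9:ℕ)^x) (fun i _ => Nat.zero_le _) hn
    by_cases hnS : n ∈ S <;> by_cases hnT : n ∈ T
    · have hS' : S.erase n ⊆ range n := by
        intro x hx
        have hx1 := Finset.mem_of_mem_erase hx
        have hx2 := Finset.ne_of_mem_erase hx
        have := hS hx1
        simp only [mem_range] at this ⊢
        omega
      have hT' : T.erase n ⊆ range n := by
        intro x hx
        have hx1 := Finset.mem_of_mem_erase hx
        have hx2 := Finset.ne_of_mem_erase hx
        have := hT hx1
        simp only [mem_range] at this ⊢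
        omega
      have h1 : 9^n + ∑ x ∈ S.erase n, (9:ℕ)^x = ∑ x ∈ S, 9^x :=
        Finset.add_sum_erase _ _ hnS
      have h2 : 9^n + ∑ x ∈ T.erase n, (9:ℕ)^x = ∑ x ∈ T, 9^x :=
        Finset.add_sum_erase _ _ hnT
      have heq : S.erase n = T.erase n := ih _ _ hS' hT' (by omega)
      ext x
      by_cases hx : x = n
      · subst hx; simp [hnS, hnT]
      · constructor
        · intro h; exact Finset.mem_of_mem_erase (heq ▸ Finset.mem_erase_of_ne_of_mem hx h)
        · intro h; exact Finset.mem_of_mem_erase (heq ▸ Finset.mem_erase_of_ne_of_mem hx h)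
    · exact absurd hsum (by have := hlt T hT hnT; have := hge S hnS; omega)
    · exact absurd hsum (by have := hlt S hS hnS; have := hge T hnT; omega)
    · have hS' : S ⊆ range n := by
        intro x hx; have := hS hx; simp only [mem_range] at this ⊢
        rcases Nat.lt_succ_iff_lt_or_eq.mp this with h | h
        · exact h
        · exact absurd (h ▸ hx) hnS
      have hT' : T ⊆ range n := by
        intro x hx; have := hT hx; simp only [mem_range] at this ⊢
        rcases Nat.lt_succ_iff_lt_or_eq.mp this with h | h
        · exact h
        · exact absurd (h ▸ hx) hnT
      exact ih _ _ hS' hT' hsum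

theorem test : True := trivial

lemma noncomputable_gval (q : ℕ) (S : Finset ℕ) (hS : S.Nonempty) (hsub : S ⊆ Finset.Icc 1 q) :
    marginalValue q S =
      9 ^ (q - S.min' hS) -
        2 * ((∑ x ∈ S.erase (S.min' hS), (9:ℕ) ^ (q - x) : ℕ) : ℤ) := by
  set m := S.min' hS with hm
  have hmS : m ∈ S := S.min'_mem hS
  have hmq : m ≤ q := (Finset.mem_Icc.mp (hsub hmS)).2
  have key : ∀ x ∈ S, ((3:ℤ) ^ (2*q - 2*x) = 9 ^ (q - x)) ∧
      ((3:ℤ) ^ (2*q - 2*x + 1) = 3 * 9 ^ (q - x)) := by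
    intro x hx
    have hxq : x ≤ q := (Finset.mem_Icc.mp (hsub hx)).2
    have h1 : 2*q - 2*x = 2 * (q - x) := by omega
    constructor
    · rw [h1, pow_mul]; norm_num
    · rw [h1, pow_succ, pow_mul]; ring_nf
  have hA : (∑ x ∈ S, (3:ℤ) ^ (2*q - 2*x)) = ∑ x ∈ S, (9:ℤ) ^ (q - x) :=
    Finset.sum_congr rfl (fun x hx => (key x hx).1)
  have hB : (∑ x ∈ S, (3:ℤ) ^ (2*q - 2*x + 1)) = 3 * ∑ x ∈ S, (9:ℤ) ^ (q - x) := by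
    rw [Finset.mul_sum]
    exact Finset.sum_congr rfl (fun x hx => (key x hx).2)
  have hC : (3:ℤ) ^ (2*q - 2*m + 1) = 3 * 9 ^ (q - m) := (key m hmS).2
  have hsplit : (∑ x ∈ S, (9:ℤ) ^ (q - x)) =
      9 ^ (q - m) + ∑ x ∈ S.erase m, (9:ℤ) ^ (q - x) :=
    (Finset.add_sum_erase _ _ hmS).symm
  have hcast : ((∑ x ∈ S.erase m, (9:ℕ) ^ (q - x) : ℕ) : ℤ) =
      ∑ x ∈ S.erase m, (9:ℤ) ^ (q - x) := by
    push_cast; rfl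
  rw [marginalValue, dif_pos hS, hA, hB, ← hm, hC, hsplit, hcast]
  ring

lemma geom9_eq (k : ℕ) : 8 * (∑ x ∈ range k, (9:ℕ)^x) + 1 = 9 ^ k := by
  induction k with
  | zero => simp
  | succ k ih => rw [Finset.sum_range_succ, pow_succ]; omega

lemma erase_image_subset {q : ℕ} {S : Finset ℕ} (hS : S.Nonempty)
    (hsub : S ⊆ Finset.Icc 1 q) :
    ((S.erase (S.min' hS)).image (fun x => q - x)) ⊆ range (q - S.min' hS) := by
  intro j hj
  simp only [Finset.mem_image] at hj
  obtain ⟨x, hx, rfl⟩ := hj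
  have hx1 := Finset.mem_of_mem_erase hx
  have hx2 := Finset.ne_of_mem_erase hx
  have hxm : S.min' hS ≤ x := S.min'_le x hx1
  have hxq : x ≤ q := (Finset.mem_Icc.mp (hsub hx1)).2
  simp only [mem_range]
  omega

lemma erase_sum_eq_image {q : ℕ} {S : Finset ℕ} (hS : S.Nonempty)
    (hsub : S ⊆ Finset.Icc 1 q) :
    (∑ x ∈ S.erase (S.min' hS), (9:ℕ) ^ (q - x)) =
      ∑ j ∈ (S.erase (S.min' hS)).image (fun x => q - x), (9:ℕ) ^ j := by
  rw [Finset.sum_image]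
  intro x hx y hy hxy
  have hxq : x ≤ q := (Finset.mem_Icc.mp (hsub (Finset.mem_of_mem_erase hx))).2
  have hyq : y ≤ q := (Finset.mem_Icc.mp (hsub (Finset.mem_of_mem_erase hy))).2
  simp only at hxy
  omega

lemma erase_sum_bound {q : ℕ} {S : Finset ℕ} (hS : S.Nonempty)
    (hsub : S ⊆ Finset.Icc 1 q) :
    8 * (∑ x ∈ S.erase (S.min' hS), (9:ℕ) ^ (q - x)) + 1 ≤ 9 ^ (q - S.min' hS) := by
  rw [erase_sum_eq_image hS hsub]
  have h1 : (∑ j ∈ (S.erase (S.min' hS)).image (fun x => q - x), (9:ℕ) ^ j)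
      ≤ ∑ j ∈ range (q - S.min' hS), (9:ℕ) ^ j :=
    Finset.sum_le_sum_of_subset (erase_image_subset hS hsub)
  have h2 := geom9_eq (q - S.min' hS)
  omega

lemma g_min_lt {q : ℕ} {S T : Finset ℕ} (hS : S.Nonempty) (hT : T.Nonempty)
    (hSsub : S ⊆ Finset.Icc 1 q) (hTsub : T ⊆ Finset.Icc 1 q)
    (hmin : S.min' hS < T.min' hT) :
    marginalValue q T < marginalValue q S := by
  rw [noncomputable_gval q S hS hSsub, noncomputable_gval q T hT hTsub]
  set m := S.min' hS
  set m' := T.min' hT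
  have hm'q : m' ≤ q := (Finset.mem_Icc.mp (hTsub (T.min'_mem hT))).2
  set A := ∑ x ∈ S.erase m, (9:ℕ) ^ (q - x) with hA
  set B := ∑ x ∈ T.erase m', (9:ℕ) ^ (q - x) with hB
  have hAb : 8 * A + 1 ≤ 9 ^ (q - m) := erase_sum_bound hS hSsub
  have hk : q - m' + 1 ≤ q - m := by omega
  have hpow : (9:ℤ) ^ (q - m' + 1) ≤ 9 ^ (q - m) :=
    pow_le_pow_right₀ (by norm_num) hk
  have hAb' : 8 * (A:ℤ) + 1 ≤ 9 ^ (q - m) := by exact_mod_cast hAb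
  have hBnn : (0:ℤ) ≤ (B:ℤ) := Int.natCast_nonneg _
  have hppos : (0:ℤ) < 9 ^ (q - m') := pow_pos (by norm_num) _
  have h9 : (9:ℤ) ^ (q - m' + 1) = 9 * 9 ^ (q - m') := by ring
  nlinarith

lemma g_injOn {q : ℕ} {S T : Finset ℕ} (hS : S.Nonempty) (hT : T.Nonempty)
    (hSsub : S ⊆ Finset.Icc 1 q) (hTsub : T ⊆ Finset.Icc 1 q)
    (heq : marginalValue q S = marginalValue q T) : S = T := by
  rcases lt_trichotomy (S.min' hS) (T.min' hT) with h | h | h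
  · exact absurd heq (ne_of_gt (g_min_lt hS hT hSsub hTsub h))
  · have hmS : S.min' hS ∈ S := S.min'_mem hS
    have hmT : T.min' hT ∈ T := T.min'_mem hT
    have heq2 := heq
    rw [noncomputable_gval q S hS hSsub, noncomputable_gval q T hT hTsub, h] at heq2
    have hAB : (∑ x ∈ S.erase (S.min' hS), (9:ℕ) ^ (q - x)) =
        ∑ x ∈ T.erase (T.min' hT), (9:ℕ) ^ (q - x) := by
      have : ((∑ x ∈ S.erase (S.min' hS), (9:ℕ) ^ (q - x) : ℕ) : ℤ) =
          ((∑ x ∈ T.erase (T.min' hT), (9:ℕ) ^ (q - x) : ℕ) : ℤ) := by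
        rw [h]
        linarith
      exact_mod_cast this
    rw [erase_sum_eq_image hS hSsub, erase_sum_eq_image hT hTsub] at hAB
    have himg : (S.erase (S.min' hS)).image (fun x => q - x) =
        (T.erase (T.min' hT)).image (fun x => q - x) := by
      refine pow9_sum_inj q _ _ ?_ ?_ hAB
      · exact (erase_image_subset hS hSsub).trans
          (Finset.range_subset_range.mpr (by omega))
      · exact (erase_image_subset hT hTsub).trans
          (Finset.range_subset_range.mpr (by omega))
    have herase : S.erase (S.min' hS) = T.erase (T.min' hT) := by
      ext x
      constructor
      · intro hx
        have hxq : x ≤ q := (Finset.mem_Icc.mp (hSsub (Finset.mem_of_mem_erase hx))).2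
        have : q - x ∈ (T.erase (T.min' hT)).image (fun x => q - x) := by
          rw [← himg]; exact Finset.mem_image_of_mem _ hx
        simp only [Finset.mem_image] at this
        obtain ⟨y, hy, hxy⟩ := this
        have hyq : y ≤ q := (Finset.mem_Icc.mp (hTsub (Finset.mem_of_mem_erase hy))).2
        have hy1 : 1 ≤ y := (Finset.mem_Icc.mp (hTsub (Finset.mem_of_mem_erase hy))).1
        have hx1 : 1 ≤ x := (Finset.mem_Icc.mp (hSsub (Finset.mem_of_mem_erase hx))).1
        have : y = x := by omega
        exact this ▸ hy
      · intro hx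
        have hxq : x ≤ q := (Finset.mem_Icc.mp (hTsub (Finset.mem_of_mem_erase hx))).2
        have : q - x ∈ (S.erase (S.min' hS)).image (fun x => q - x) := by
          rw [himg]; exact Finset.mem_image_of_mem _ hx
        simp only [Finset.mem_image] at this
        obtain ⟨y, hy, hxy⟩ := this
        have hyq : y ≤ q := (Finset.mem_Icc.mp (hSsub (Finset.mem_of_mem_erase hy))).2
        have : y = x := by omega
        exact this ▸ hy
    ext x
    by_cases hx : x = S.min' hS
    · subst hx; simp [hmS, h ▸ hmT]
    · constructor
      · intro hxS
        exact Finset.mem_of_mem_erase (herase ▸ Finset.mem_erase_of_ne_of_mem hx hxS)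
      · intro hxT
        have hx' : x ≠ T.min' hT := h ▸ hx
        exact Finset.mem_of_mem_erase
          (herase.symm ▸ Finset.mem_erase_of_ne_of_mem hx' hxT)
  · exact absurd heq.symm (ne_of_gt (g_min_lt hT hS hTsub hSsub h))

/-- `g` is injective on the nonempty subsets of `{1, …, q}`; consequently the
set of its values over nonempty subsets has cardinality exactly `2^q - 1`. -/
theorem marginalValue_injective (q : ℕ) (hq : 0 < q) :
    (∀ S ∈ (Finset.Icc 1 q).powerset.filter Finset.Nonempty,
      ∀ S' ∈ (Finset.Icc 1 q).powerset.filter Finset.Nonempty,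
        marginalValue q S = marginalValue q S' → S = S') ∧
    (((Finset.Icc 1 q).powerset.filter Finset.Nonempty).image
        (marginalValue q)).card = 2 ^ q - 1 := by
  have hinj : ∀ S ∈ (Finset.Icc 1 q).powerset.filter Finset.Nonempty,
      ∀ S' ∈ (Finset.Icc 1 q).powerset.filter Finset.Nonempty,
        marginalValue q S = marginalValue q S' → S = S' := by
    intro S hSm S' hS'm heq
    simp only [Finset.mem_filter, Finset.mem_powerset] at hSm hS'm
    exact g_injOn hSm.2 hS'm.2 hSm.1 hS'm.1 heq
  refine ⟨hinj, ?_⟩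
  rw [Finset.card_image_of_injOn (fun S hS S' hS' h => hinj S hS S' hS' h)]
  have hfe : (Finset.Icc 1 q).powerset.filter Finset.Nonempty =
      (Finset.Icc 1 q).powerset.erase ∅ := by
    ext t
    simp [Finset.nonempty_iff_ne_empty, and_comm]
  rw [hfe, Finset.card_erase_of_mem (Finset.empty_mem_powerset _),
    Finset.card_powerset, Nat.card_Icc]
  simp
end
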